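/- arXiv:2501.05348 — 2 statements merged into one kernel-verified Lean document; each statement's English description precedes it below -/
import Mathlib

section
/- The collection of all 2-factors that are complements of the 6 perfect matchings of the Petersen graph forms a 6-cycle 4-cover: each edge of the Petersen graph is covered exactly 4 times by these 6 even subgraphs. -/
/-!
A perfect matching of a finite graph is a spanning matching, so it is determined by its edge set,
and the edge sets that occur are exactly the sets of `|V| / 2` edges meeting every vertex once.
Counting perfect matchings with a given property is therefore a finite search over sets of edges.
For the Petersen graph the search finds 6 perfect matchings, each edge lying in exactly 2 of them,
so every edge avoids exactly `6 - 2 = 4` of them.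
-/

/-- Vertices of the Petersen graph: 2-element subsets of a 5-element set. -/
abbrev PetersenVertex : Type := {s : Finset (Fin 5) // s.card = 2}

/-- The Petersen graph as the Kneser graph K(5,2). -/
def petersen : SimpleGraph PetersenVertex :=
  SimpleGraph.fromRel (fun a b => Disjoint a.1 b.1)

open Finset

namespace SimpleGraph

theorem exists_subgraph_isSpanning_edgeSet_eq {V : Type*} {G : SimpleGraph V}
    {s : Set (Sym2 V)} (hs : s ⊆ G.edgeSet) : ∃ M : G.Subgraph, M.IsSpanning ∧ M.edgeSet = s := by
  refine ⟨toSubgraph (fromEdgeSet s) ((fromEdgeSet_le G).2 (Set.sdiff_subset.trans hs)),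
    toSubgraph.isSpanning _ _, ?_⟩
  ext e
  induction e using Sym2.ind with
  | _ v w =>
    simp only [Subgraph.mem_edgeSet, toSubgraph_adj, fromEdgeSet_adj, and_iff_left_iff_imp]
    exact fun h => G.ne_of_adj (hs h)

variable {V : Type*} [Fintype V] {G : SimpleGraph V}

namespace Subgraph

theorem isPerfectMatching_iff_forall_card_filter_mem [DecidableEq V] (M : G.Subgraph)
    [Fintype M.edgeSet] : M.IsPerfectMatching ↔ ∀ v, #{e ∈ M.edgeSet.toFinset | v ∈ e} = 1 := by
  classical
  simp only [isPerfectMatching_iff_forall_degree, ← degree_spanningCoe,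
    ← card_incidenceFinset_eq_degree, incidenceFinset_eq_filter, edgeFinset, edgeSet_spanningCoe]

theorem IsPerfectMatching.card_edgeSet_toFinset {M : G.Subgraph} [Fintype M.edgeSet]
    (hM : M.IsPerfectMatching) : #M.edgeSet.toFinset = Fintype.card V / 2 := by
  classical
  have hsum := M.spanningCoe.sum_degrees_eq_twice_card_edges
  simp only [degree_spanningCoe, isPerfectMatching_iff_forall_degree.1 hM, sum_const, card_univ,
    smul_eq_mul, mul_one, edgeFinset, edgeSet_spanningCoe] at hsum
  omega

end Subgraph

variable [DecidableEq V] (G) [DecidableRel G.Adj]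

/-- The cardinality condition is implied by the covering condition; it is there to keep the
search space small when the set is computed by `decide`. -/
def perfectMatchingEdgeFinsets : Finset (Finset (Sym2 V)) :=
  {s ∈ G.edgeFinset.powersetCard (Fintype.card V / 2) | ∀ v, #{e ∈ s | v ∈ e} = 1}

theorem mem_perfectMatchingEdgeFinsets_iff {s : Finset (Sym2 V)} :
    s ∈ G.perfectMatchingEdgeFinsets ↔ ∃ M : G.Subgraph, M.IsPerfectMatching ∧ M.edgeSet = s := by
  classical
  constructor
  · simp only [perfectMatchingEdgeFinsets, mem_filter, mem_powersetCard]
    rintro ⟨⟨hsG, -⟩, hcover⟩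
    obtain ⟨M, -, hMs⟩ := exists_subgraph_isSpanning_edgeSet_eq (G := G) (s := s)
      (by simpa [← coe_subset] using hsG)
    have hs : M.edgeSet.toFinset = s := by simp [hMs]
    exact ⟨M, M.isPerfectMatching_iff_forall_card_filter_mem.2 (hs ▸ hcover), hMs⟩
  · rintro ⟨M, hM, hMs⟩
    have hs : M.edgeSet.toFinset = s := by simp [hMs]
    simp only [perfectMatchingEdgeFinsets, mem_filter, mem_powersetCard]
    refine ⟨⟨?_, hs ▸ hM.card_edgeSet_toFinset⟩,
      hs ▸ M.isPerfectMatching_iff_forall_card_filter_mem.1 hM⟩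
    rw [← coe_subset, ← hMs, coe_edgeFinset]
    exact M.edgeSet_subset

theorem ncard_setOf_isPerfectMatching_and (P : Set (Sym2 V) → Prop)
    [DecidablePred fun s : Finset (Sym2 V) => P s] :
    {M : G.Subgraph | M.IsPerfectMatching ∧ P M.edgeSet}.ncard =
      #(G.perfectMatchingEdgeFinsets.filter fun s : Finset (Sym2 V) => P s) := by
  have hinj : {M : G.Subgraph | M.IsPerfectMatching ∧ P M.edgeSet}.InjOn Subgraph.edgeSet :=
    Subgraph.IsMatching.injOn_edgeSet.mono fun M hM => hM.1.1
  have himage : Subgraph.edgeSet '' {M : G.Subgraph | M.IsPerfectMatching ∧ P M.edgeSet} =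
      (↑) '' (↑(G.perfectMatchingEdgeFinsets.filter fun s : Finset (Sym2 V) => P s) :
        Set (Finset (Sym2 V))) := by
    ext S
    simp only [Set.mem_image, Set.mem_ofPred_eq, coe_filter, mem_perfectMatchingEdgeFinsets_iff]
    constructor
    · rintro ⟨M, ⟨hM, hP⟩, rfl⟩
      classical
      exact ⟨M.edgeSet.toFinset, ⟨⟨M, hM, by simp⟩, by simpa using hP⟩, by simp⟩
    · rintro ⟨s, ⟨⟨M, hM, hMs⟩, hP⟩, rfl⟩
      exact ⟨M, ⟨hM, hMs ▸ hP⟩, hMs⟩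
  rw [← hinj.ncard_image, himage, Set.ncard_image_of_injective _ coe_injective,
    Set.ncard_coe_finset]

end SimpleGraph

instance : DecidableRel petersen.Adj := fun a b =>
  decidable_of_iff (a ≠ b ∧ (Disjoint a.1 b.1 ∨ Disjoint b.1 a.1)) Iff.rfl

set_option maxRecDepth 100000 in
theorem card_perfectMatchingEdgeFinsets_petersen : #petersen.perfectMatchingEdgeFinsets = 6 := by
  decide

set_option maxRecDepth 100000 in
theorem card_filter_mem_perfectMatchingEdgeFinsets_petersen :
    ∀ e ∈ petersen.edgeFinset, #{s ∈ petersen.perfectMatchingEdgeFinsets | e ∈ s} = 2 := by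
  decide

/-- The complements of the 6 perfect matchings of the Petersen graph form a
6-cycle 4-cover: every edge is covered exactly 4 times, i.e. every edge lies
in the complement of exactly 4 of the perfect matchings. -/
theorem stmt8 :
    ∀ e ∈ petersen.edgeSet,
      Set.ncard {M : petersen.Subgraph | M.IsPerfectMatching ∧ e ∉ M.edgeSet} = 4 := by
  intro e he
  rw [SimpleGraph.ncard_setOf_isPerfectMatching_and petersen (e ∉ ·)]
  simp only [mem_coe]
  have hsplit := card_filter_add_card_filter_not (s := petersen.perfectMatchingEdgeFinsets) (e ∈ ·)
  rw [card_perfectMatchingEdgeFinsets_petersen,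
    card_filter_mem_perfectMatchingEdgeFinsets_petersen e (SimpleGraph.mem_edgeFinset.2 he)] at hsplit
  omega
end

section
/- A graph admits a 3-cycle double cover if and only if it admits an oriented 4-cycle double cover. -/
/-!
An even subgraph has an Eulerian orientation: a skew-symmetric flow with values in `{0, 1, -1}`,
supported exactly on its edges and with zero divergence. This is proved by induction on the
number of edges, for edge sets with exactly two odd vertices `a ≠ b` or none (`a = b`), with
divergence `1` at `a` and `-1` at `b`.

Given a 3-cycle double cover with orientations `σ₀, σ₁, σ₂`, let `χ₀, χ₁, χ₂` be the non-trivial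
characters of the Klein four-group `K`. For `g ∈ K`, the flow `f_g = ½ ∑ₖ χₖ(g) σₖ` is an
oriented cycle: on an edge exactly two `σₖ` are `±1`, and any two characters take each pair of
signs at exactly one `g`, so exactly one `f_g` is `1` and exactly one is `-1` there. Conversely,
the supports `D₀, …, D₃` of an oriented 4-cycle double cover are even subgraphs covering each
edge twice, and `D₀ ∆ D₁, D₀ ∆ D₂, D₀ ∆ D₃` is a 3-cycle double cover.
-/

/-- An even subgraph (cycle) of `G`, given by its edge set: a subset of the
edges of `G` in which every vertex has even degree. -/
def IsEvenSubgraph {V : Type*} (G : SimpleGraph V) (E : Set (Sym2 V)) : Prop :=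
  E ⊆ G.edgeSet ∧ ∀ v : V, Even (Set.ncard {w : V | s(v, w) ∈ E})

/-- An oriented cycle (oriented even subgraph) of `G`, encoded as a
divergence-free skew-symmetric flow with values in `{-1, 0, 1}` supported
on edges of `G`. -/
def IsOrientedCycle {V : Type*} [Fintype V] (G : SimpleGraph V)
    (f : V → V → ℤ) : Prop :=
  (∀ u v, f u v = - f v u) ∧
  (∀ u v, f u v ≠ 0 → G.Adj u v) ∧
  (∀ u v, f u v = 0 ∨ f u v = 1 ∨ f u v = -1) ∧
  (∀ v, ∑ w, f v w = 0)

open Finset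
open scoped symmDiff

lemma Set.odd_ncard_diff_singleton_iff {α : Type*} {s : Set α} {x : α} (hx : x ∈ s)
    (hs : s.Finite) : Odd (s \ {x}).ncard ↔ ¬ Odd s.ncard := by
  rw [← Set.ncard_sdiff_singleton_add_one hx hs, Nat.odd_add_one, not_not]

lemma even_ncard_ne_zero_of_sum_eq_zero {α : Type*} [Fintype α] (g : α → ℤ)
    (hval : ∀ w, g w = 0 ∨ g w = 1 ∨ g w = -1) (hsum : ∑ w, g w = 0) :
    Even {w | g w ≠ 0}.ncard := by
  classical
  rw [Set.ncard_eq_toFinset_card', Set.toFinset_ofPred, ← ZMod.natCast_eq_zero_iff_even,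
    Finset.natCast_card_filter]
  calc ∑ w, (if g w ≠ 0 then 1 else 0 : ZMod 2) = ∑ w, ((g w : ℤ) : ZMod 2) :=
        Finset.sum_congr rfl fun w _ => by rcases hval w with h | h | h <;> simp [h]
    _ = 0 := by rw [← Int.cast_sum, hsum, Int.cast_zero]

lemma Set.even_ncard_symmDiff {α : Type*} {s t : Set α} (hs : s.Finite) (ht : t.Finite)
    (hs' : Even s.ncard) (ht' : Even t.ncard) : Even (s ∆ t).ncard := by
  have hu := Set.ncard_union_add_ncard_inter s t hs ht
  have hsub : s ∩ t ⊆ s ∪ t := Set.inter_subset_left.trans Set.subset_union_left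
  have hd : (s ∆ t).ncard = (s ∪ t).ncard - (s ∩ t).ncard := by
    rw [symmDiff_eq_sup_sdiff_inf]
    exact Set.ncard_sdiff hsub (hs.inter_of_left t)
  have hle : (s ∩ t).ncard ≤ (s ∪ t).ncard := Set.ncard_le_ncard hsub (hs.union ht)
  rw [Nat.even_iff] at hs' ht' ⊢
  omega

section

variable {V : Type*}

structure IsSignedOrientation (E : Set (Sym2 V)) (σ : V → V → ℤ) : Prop where
  skew : ∀ u v, σ u v = -σ v u
  values : ∀ u v, σ u v = 0 ∨ σ u v = 1 ∨ σ u v = -1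
  ne_zero_iff : ∀ u v, σ u v ≠ 0 ↔ s(u, v) ∈ E

lemma odd_degree_diff_iff [Finite V] {E : Set (Sym2 V)} {a c : V} (he : s(a, c) ∈ E)
    (hac : a ≠ c) (v : V) : Odd {w | s(v, w) ∈ E \ {s(a, c)}}.ncard ↔
      Xor (Odd {w | s(v, w) ∈ E}.ncard) (v = a ∨ v = c) := by
  have hdiff : {w | s(v, w) ∈ E \ {s(a, c)}} = {w | s(v, w) ∈ E} \ {w | s(v, w) = s(a, c)} := rfl
  rw [hdiff]
  by_cases hva : v = a
  · subst hva
    have : {w | s(v, w) = s(v, c)} = {c} := by ext; exact Sym2.congr_right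
    rw [this, Set.odd_ncard_diff_singleton_iff (show c ∈ {w | s(v, w) ∈ E} from he)
      (Set.toFinite _)]
    simp [xor_iff_not_iff]
  by_cases hvc : v = c
  · subst hvc
    have : {w | s(v, w) = s(a, v)} = {a} := by
      ext; rw [Set.mem_ofPred_eq, Sym2.eq_swap (a := a)]; exact Sym2.congr_right
    rw [this, Set.odd_ncard_diff_singleton_iff (show a ∈ {w | s(v, w) ∈ E} by
      rwa [Set.mem_ofPred_eq, Sym2.eq_swap]) (Set.toFinite _)]
    simp [xor_iff_not_iff]
  · simp [hva, hvc, xor_iff_not_iff]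

section DecidableEq

variable [DecidableEq V]

def unitFlow (a c : V) (u v : V) : ℤ :=
  (if u = a ∧ v = c then 1 else 0) - (if u = c ∧ v = a then 1 else 0)

lemma sum_unitFlow [Fintype V] (a c v : V) :
    ∑ w, unitFlow a c v w = (if v = a then 1 else 0) - (if v = c then 1 else 0) := by
  simp [unitFlow, Finset.sum_sub_distrib, ite_and]

lemma unitFlow_skew (a c u v : V) : unitFlow a c u v = -unitFlow a c v u := by
  simp only [unitFlow]
  split_ifs <;> grind

lemma unitFlow_eq_zero {a c u v : V} (h : s(u, v) ≠ s(a, c)) : unitFlow a c u v = 0 := by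
  simp only [unitFlow]
  split_ifs <;> simp_all [Sym2.eq_swap]

lemma IsSignedOrientation.insert {E : Set (Sym2 V)} {σ : V → V → ℤ}
    (hσ : IsSignedOrientation E σ) {a c : V} (hac : a ≠ c) (he : s(a, c) ∉ E) :
    IsSignedOrientation (insert s(a, c) E) (σ + unitFlow a c) := by
  have hσac : σ a c = 0 := not_not.mp fun h => he ((hσ.ne_zero_iff a c).mp h)
  have hσca : σ c a = 0 := by rw [hσ.skew, hσac, neg_zero]
  refine ⟨fun u v => ?_, fun u v => ?_, fun u v => ?_⟩
  · simp only [Pi.add_apply]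
    rw [hσ.skew u v, unitFlow_skew]
    ring
  · by_cases h : s(u, v) = s(a, c)
    · rcases Sym2.eq_iff.mp h with ⟨rfl, rfl⟩ | ⟨rfl, rfl⟩ <;> simp [unitFlow, hσac, hσca, hac]
    · simp [unitFlow_eq_zero h, hσ.values u v]
  · by_cases h : s(u, v) = s(a, c)
    · rcases Sym2.eq_iff.mp h with ⟨rfl, rfl⟩ | ⟨rfl, rfl⟩ <;>
        simp [unitFlow, hσac, hσca, hac, Sym2.eq_swap]
    · simp [unitFlow_eq_zero h, hσ.ne_zero_iff u v, h]

lemma exists_signedOrientation_of_diff [Fintype V] {E : Set (Sym2 V)} {a b c : V}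
    (he : s(a, c) ∈ E) (hac : a ≠ c)
    (h : ∃ σ, IsSignedOrientation (E \ {s(a, c)}) σ ∧
      ∀ v, ∑ w, σ v w = (if v = c then 1 else 0) - (if v = b then 1 else 0)) :
    ∃ σ, IsSignedOrientation E σ ∧
      ∀ v, ∑ w, σ v w = (if v = a then 1 else 0) - (if v = b then 1 else 0) := by
  obtain ⟨σ, hσ, hsum⟩ := h
  refine ⟨σ + unitFlow a c, ?_, fun v => ?_⟩
  · simpa [Set.insert_eq_of_mem he] using hσ.insert hac (by simp)
  · simp only [Pi.add_apply, Finset.sum_add_distrib, hsum, sum_unitFlow]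
    ring

lemma exists_signedOrientation_sum_eq [Fintype V] (E : Set (Sym2 V))
    (hE : ∀ e ∈ E, ¬ e.IsDiag) (a b : V)
    (hodd : ∀ v, Odd {w | s(v, w) ∈ E}.ncard ↔ Xor (v = a) (v = b)) :
    ∃ σ, IsSignedOrientation E σ ∧
      ∀ v, ∑ w, σ v w = (if v = a then 1 else 0) - (if v = b then 1 else 0) := by
  induction hn : E.ncard using Nat.strong_induction_on generalizing E a b with
  | _ n ih =>
  -- removing an edge `ac` turns the odd pair `{a, b}` into `{c, b}`
  have step : ∀ a' b' c, s(a', c) ∈ E →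
      (∀ v, Odd {w | s(v, w) ∈ E}.ncard ↔ Xor (v = a') (v = b')) →
      ∃ σ, IsSignedOrientation E σ ∧
        ∀ v, ∑ w, σ v w = (if v = a' then 1 else 0) - (if v = b' then 1 else 0) := by
    intro a' b' c he hodd'
    have hac : a' ≠ c := fun h => hE _ he (Sym2.mk_isDiag_iff.mpr h)
    exact exists_signedOrientation_of_diff he hac <|
      ih _ (hn ▸ Set.ncard_sdiff_singleton_lt_of_mem he) _ (fun e he' => hE e he'.1) c b'
        (fun v => by rw [odd_degree_diff_iff he hac, hodd']; grind) rfl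
  by_cases ha : ∃ c, s(a, c) ∈ E
  · obtain ⟨c, he⟩ := ha
    exact step a b c he hodd
  -- otherwise `a` has even degree `0`, so `a = b` and any edge `xy` can serve as a start
  push Not at ha
  obtain rfl : a = b := by
    by_contra hab
    simpa [ha, hab] using hodd a
  rcases E.eq_empty_or_nonempty with rfl | ⟨⟨x, y⟩, he⟩
  · exact ⟨0, ⟨by simp, by simp, by simp⟩, by simp⟩
  simpa using step x x y he (fun v => by simpa [Nat.not_even_iff_odd] using hodd v)

end DecidableEq

theorem IsEvenSubgraph.exists_signedOrientation [Fintype V] {G : SimpleGraph V}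
    {E : Set (Sym2 V)} (hE : IsEvenSubgraph G E) :
    ∃ σ, IsSignedOrientation E σ ∧ ∀ v, ∑ w, σ v w = 0 := by
  classical
  cases isEmpty_or_nonempty V
  · exact ⟨0, ⟨isEmptyElim, isEmptyElim, isEmptyElim⟩, isEmptyElim⟩
  obtain ⟨a⟩ := ‹Nonempty V›
  simpa using exists_signedOrientation_sum_eq E
    (fun _ he => G.not_isDiag_of_mem_edgeSet (hE.1 he)) a a
    (fun v => by simpa [Nat.not_even_iff_odd] using hE.2 v)

lemma isOrientedCycle_of_two_mul [Fintype V] {G : SimpleGraph V} {f y : V → V → ℤ}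
    (hfy : ∀ u v, 2 * f u v = y u v) (hskew : ∀ u v, y u v = -y v u)
    (hadj : ∀ u v, y u v ≠ 0 → G.Adj u v) (hval : ∀ u v, y u v ∈ ({0, 2, -2} : Finset ℤ))
    (hdiv : ∀ v, ∑ w, y v w = 0) : IsOrientedCycle G f := by
  refine ⟨fun u v => ?_, fun u v h => hadj u v ?_, fun u v => ?_, fun v => ?_⟩
  · have := hfy u v; have := hfy v u; have := hskew u v; omega
  · have := hfy u v; omega
  · have := hfy u v; have := hval u v; simp only [Finset.mem_insert, Finset.mem_singleton] at this
    omega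
  · have : 2 * ∑ w, f v w = ∑ w, y v w := by simp only [Finset.mul_sum, hfy]
    have := hdiv v
    omega

/-- The rows are the three non-trivial characters of the Klein four-group, whose elements are
listed as `Fin 4`. Any two rows take each of the four sign patterns exactly once. -/
def kleinSign : Fin 3 → Fin 4 → ℤ := ![![1, 1, -1, -1], ![1, -1, 1, -1], ![1, -1, -1, 1]]

lemma kleinSign_sum_of_card_support_eq_two :
    ∀ x ∈ Fintype.piFinset (fun _ : Fin 3 => ({0, 1, -1} : Finset ℤ)), #{k | x k ≠ 0} = 2 →
      (∀ g, ∑ k, kleinSign k g * x k ∈ ({0, 2, -2} : Finset ℤ)) ∧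
      #{g | ∑ k, kleinSign k g * x k = 2} = 1 ∧ #{g | ∑ k, kleinSign k g * x k = -2} = 1 := by
  decide

lemma kleinSign_sum_of_isSignedOrientation {C : Fin 3 → Set (Sym2 V)} {σ : Fin 3 → V → V → ℤ}
    (hσ : ∀ k, IsSignedOrientation (C k) (σ k)) {u v : V}
    (huv : Set.ncard {k | s(u, v) ∈ C k} = 2) :
    (∀ g, ∑ k, kleinSign k g * σ k u v ∈ ({0, 2, -2} : Finset ℤ)) ∧
      #{g | ∑ k, kleinSign k g * σ k u v = 2} = 1 ∧
      #{g | ∑ k, kleinSign k g * σ k u v = -2} = 1 := by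
  classical
  exact kleinSign_sum_of_card_support_eq_two _
    (Fintype.mem_piFinset.mpr fun k => by simpa using (hσ k).values u v)
    (by simpa [Set.ncard_eq_toFinset_card', (hσ _).ne_zero_iff] using huv)

theorem orientedFourCover_of_threeCover [Fintype V] {G : SimpleGraph V}
    (C : Fin 3 → Set (Sym2 V)) (hC : ∀ i, IsEvenSubgraph G (C i))
    (hcov : ∀ e ∈ G.edgeSet, Set.ncard {i : Fin 3 | e ∈ C i} = 2) :
    ∃ f : Fin 4 → V → V → ℤ,
      (∀ i, IsOrientedCycle G (f i)) ∧
      (∀ u v, G.Adj u v →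
        Set.ncard {i : Fin 4 | f i u v = 1} = 1 ∧
        Set.ncard {i : Fin 4 | f i u v = -1} = 1) := by
  classical
  choose σ hσ hdiv using fun k => (hC k).exists_signedOrientation
  set y : Fin 4 → V → V → ℤ := fun g u v => ∑ k, kleinSign k g * σ k u v
  have hedge : ∀ u v, G.Adj u v → (∀ g, y g u v ∈ ({0, 2, -2} : Finset ℤ)) ∧
      #{g | y g u v = 2} = 1 ∧ #{g | y g u v = -2} = 1 :=
    fun u v huv => kleinSign_sum_of_isSignedOrientation hσ (hcov s(u, v) huv)
  have hoff : ∀ g u v, ¬ G.Adj u v → y g u v = 0 := by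
    intro g u v huv
    refine Finset.sum_eq_zero fun k _ => ?_
    have : σ k u v = 0 := not_not.mp fun h => huv ((hC k).1 (((hσ k).ne_zero_iff u v).mp h))
    simp [this]
  have hval : ∀ g u v, y g u v ∈ ({0, 2, -2} : Finset ℤ) := by
    intro g u v
    by_cases huv : G.Adj u v
    · exact (hedge u v huv).1 g
    · simp [hoff g u v huv]
  have hhalf : ∀ g u v, 2 * (y g u v / 2) = y g u v := by
    intro g u v; have := hval g u v; simp only [Finset.mem_insert, Finset.mem_singleton] at this
    omega
  refine ⟨fun g u v => y g u v / 2,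
    fun g => isOrientedCycle_of_two_mul (hhalf g) ?_ ?_ (hval g) ?_, ?_⟩
  · intro u v
    simp only [y, (hσ _).skew u v, mul_neg, Finset.sum_neg_distrib]
  · exact fun u v h => not_not.mp fun huv => h (hoff g u v huv)
  · intro v
    simp only [y]
    rw [Finset.sum_comm]
    simp [← Finset.mul_sum, hdiv]
  · intro u v huv
    have h1 : ∀ g, y g u v / 2 = 1 ↔ y g u v = 2 := fun g => by have := hhalf g u v; omega
    have h2 : ∀ g, y g u v / 2 = -1 ↔ y g u v = -2 := fun g => by have := hhalf g u v; omega
    simpa [Set.ncard_eq_toFinset_card', h1, h2] using (hedge u v huv).2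

lemma IsEvenSubgraph.symmDiff [Finite V] {G : SimpleGraph V} {A B : Set (Sym2 V)}
    (hA : IsEvenSubgraph G A) (hB : IsEvenSubgraph G B) : IsEvenSubgraph G (A ∆ B) := by
  refine ⟨Set.symmDiff_subset_union.trans (Set.union_subset hA.1 hB.1), fun v => ?_⟩
  have : {w | s(v, w) ∈ A ∆ B} = {w | s(v, w) ∈ A} ∆ {w | s(v, w) ∈ B} := by
    ext; simp [Set.mem_symmDiff]
  rw [this]
  exact Set.even_ncard_symmDiff (Set.toFinite _) (Set.toFinite _) (hA.2 v) (hB.2 v)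

lemma IsOrientedCycle.ne_zero_symm [Fintype V] {G : SimpleGraph V} {f : V → V → ℤ}
    (hf : IsOrientedCycle G f) : Std.Symm fun u v => f u v ≠ 0 :=
  ⟨fun u v h => by rwa [hf.1 u v, neg_ne_zero] at h⟩

lemma IsOrientedCycle.isEvenSubgraph_fromRel [Fintype V] {G : SimpleGraph V} {f : V → V → ℤ}
    (hf : IsOrientedCycle G f) : IsEvenSubgraph G (Sym2.fromRel hf.ne_zero_symm) :=
  ⟨Sym2.ind fun u v h => hf.2.1 u v h,
    fun v => even_ncard_ne_zero_of_sum_eq_zero (f v) (hf.2.2.1 v) (hf.2.2.2 v)⟩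

lemma card_xor_mem_succ_eq_two :
    ∀ T : Finset (Fin 4), #T = 2 → #{k : Fin 3 | Xor (0 ∈ T) (k.succ ∈ T)} = 2 := by
  decide

theorem threeCover_of_orientedFourCover [Fintype V] {G : SimpleGraph V}
    (f : Fin 4 → V → V → ℤ) (hf : ∀ i, IsOrientedCycle G (f i))
    (hcov : ∀ u v, G.Adj u v →
        Set.ncard {i : Fin 4 | f i u v = 1} = 1 ∧ Set.ncard {i : Fin 4 | f i u v = -1} = 1) :
    ∃ C : Fin 3 → Set (Sym2 V),
      (∀ i, IsEvenSubgraph G (C i)) ∧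
      (∀ e ∈ G.edgeSet, Set.ncard {i : Fin 3 | e ∈ C i} = 2) := by
  classical
  let D i := Sym2.fromRel (hf i).ne_zero_symm
  refine ⟨fun k => D 0 ∆ D k.succ,
    fun k => (hf 0).isEvenSubgraph_fromRel.symmDiff (hf k.succ).isEvenSubgraph_fromRel, ?_⟩
  rintro ⟨u, v⟩ huv
  obtain ⟨hpos, hneg⟩ := hcov u v huv
  have hsupp : {i | f i u v ≠ 0} = {i | f i u v = 1} ∪ {i | f i u v = -1} := by
    ext i; rcases (hf i).2.2.1 u v with h | h | h <;> simp [h]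
  have hdisj : Disjoint {i | f i u v = 1} {i | f i u v = -1} :=
    Set.disjoint_left.mpr fun i h1 h2 => by simp_all
  have h2 : #{i | f i u v ≠ 0} = 2 := by
    rw [← Set.toFinset_ofPred, ← Set.ncard_eq_toFinset_card', hsupp,
      Set.ncard_union_eq hdisj, hpos, hneg]
  simpa [Set.ncard_eq_toFinset_card', Set.mem_symmDiff, xor_def, D] using
    card_xor_mem_succ_eq_two _ h2

end

/-- A graph admits a 3-cycle double cover (3 even subgraphs covering every
edge exactly twice) if and only if it admits an oriented 4-cycle double
cover (4 oriented even subgraphs covering every edge exactly twice, once in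
each direction). -/
theorem stmt19 {V : Type*} [Fintype V] (G : SimpleGraph V) :
    (∃ C : Fin 3 → Set (Sym2 V),
      (∀ i, IsEvenSubgraph G (C i)) ∧
      (∀ e ∈ G.edgeSet, Set.ncard {i : Fin 3 | e ∈ C i} = 2)) ↔
    (∃ f : Fin 4 → V → V → ℤ,
      (∀ i, IsOrientedCycle G (f i)) ∧
      (∀ u v, G.Adj u v →
        Set.ncard {i : Fin 4 | f i u v = 1} = 1 ∧
        Set.ncard {i : Fin 4 | f i u v = -1} = 1)) :=
  ⟨fun ⟨C, hC, hcov⟩ => orientedFourCover_of_threeCover C hC hcov,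
    fun ⟨f, hf, hcov⟩ => threeCover_of_orientedFourCover f hf hcov⟩
end
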